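/- Let G be a simple graph and let C be a cycle of G containing consecutive vertices w, x, y, z. Let c be a vertex of G not on C that is adjacent to both w and y, and suppose x is adjacent to z in G. Then G contains a cycle of length |C| + 1 whose vertex set is V(C) ∪ {c}; the new cycle is obtained from C by replacing the path (w, x, y, z) with the path (w, c, y, x, z). -/

import Mathlib

/-!
After rotating and possibly reversing `C` we may write it as `x → y → z ⇝ w → x`, where the
remaining arc `R : z ⇝ w` is a path avoiding `x` and `y`. The walk `w → c → y → x → z ⇝ w` is
then a cycle because `c` lies off `C`, and its length, vertices and edges are read off from
those of `R`.
-/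

namespace SimpleGraph.Walk

variable {V : Type*} {G : SimpleGraph V}

lemma IsPath.exists_eq_cons_of_mem_edges {u v b : V} {p : G.Walk u v} (hp : p.IsPath)
    (h : s(u, b) ∈ p.edges) : ∃ (hb : G.Adj u b) (q : G.Walk b v), p = cons hb q := by
  obtain rfl := hp.eq_snd_of_mem_edges h
  have hp : ¬ p.Nil := by cases p <;> simp_all
  exact ⟨adj_snd hp, p.tail, (p.cons_tail_eq hp).symm⟩

lemma IsPath.exists_eq_concat_of_mem_edges {u v b : V} {p : G.Walk u v} (hp : p.IsPath)
    (h : s(b, v) ∈ p.edges) : ∃ (q : G.Walk u b) (hb : G.Adj b v), p = q.concat hb := by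
  obtain ⟨hb, q, hq⟩ := (isPath_reverse_iff p).mpr hp |>.exists_eq_cons_of_mem_edges
    (b := b) (by simpa [Sym2.eq_swap] using h)
  exact ⟨q.reverse, hb.symm, by simpa [concat_eq_append] using congrArg Walk.reverse hq⟩

lemma IsCycle.exists_eq_cons_or_reverse_eq_cons {x y : V} {D : G.Walk x x} (hD : D.IsCycle)
    (h : s(x, y) ∈ D.edges) :
    ∃ (hxy : G.Adj x y) (P : G.Walk y x), D = cons hxy P ∨ D.reverse = cons hxy P := by
  cases D with
  | nil => simp at h
  | @cons _ b _ hxb P =>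
    rw [edges_cons, List.mem_cons] at h
    rcases h with h | h
    · obtain rfl := Sym2.congr_right.mp h
      exact ⟨hxb, P, .inl rfl⟩
    · obtain ⟨q, hyx, rfl⟩ := ((cons_isCycle_iff P hxb).mp hD).1.exists_eq_concat_of_mem_edges
        (Sym2.eq_swap ▸ h)
      exact ⟨hyx.symm, q.reverse.concat hxb.symm, .inr (by simp [concat_eq_append])⟩

lemma IsCycle.exists_cons_of_mem_edges {v x y : V} {C : G.Walk v v} (hC : C.IsCycle)
    (h : s(x, y) ∈ C.edges) :
    ∃ (hxy : G.Adj x y) (P : G.Walk y x), (cons hxy P).IsCycle ∧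
      (cons hxy P).length = C.length ∧ (∀ t, t ∈ (cons hxy P).support ↔ t ∈ C.support) ∧
      ∀ e, e ∈ (cons hxy P).edges ↔ e ∈ C.edges := by
  classical
  have hx := C.fst_mem_support_of_mem_edges h
  have hD := hC.rotate hx
  have hedges := fun e ↦ (C.rotate_edges x hx).perm.mem_iff (a := e)
  obtain ⟨hxy, P, hP | hP⟩ := hD.exists_eq_cons_or_reverse_eq_cons (hedges _ |>.mpr h)
  · refine ⟨hxy, P, hP ▸ hD, by simp [← hP], fun t ↦ ?_, fun e ↦ ?_⟩
    · rw [← hP, mem_support_rotate_iff]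
    · rw [← hP, hedges]
  · refine ⟨hxy, P, hP ▸ hD.reverse, by simp [← hP], fun t ↦ ?_, fun e ↦ ?_⟩
    · rw [← hP, support_reverse, List.mem_reverse, mem_support_rotate_iff]
    · rw [← hP, edges_reverse, List.mem_reverse, hedges]

lemma IsCycle.exists_eq_cons_cons_concat {w x y z : V} {hxy : G.Adj x y} {P : G.Walk y x}
    (hC : (cons hxy P).IsCycle) (hyz : s(y, z) ∈ (cons hxy P).edges)
    (hwx : s(w, x) ∈ (cons hxy P).edges) (hwy : w ≠ y) (hxz : x ≠ z) :
    ∃ (hyz : G.Adj y z) (R : G.Walk z w) (hwx : G.Adj w x), P = cons hyz (R.concat hwx) := by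
  have hP := ((cons_isCycle_iff P hxy).mp hC).1
  have hyzP : s(y, z) ∈ P.edges := by
    simp only [edges_cons, List.mem_cons, Sym2.eq_iff] at hyz
    grind
  obtain ⟨hyz', Q, rfl⟩ := hP.exists_eq_cons_of_mem_edges hyzP
  have hwxQ : s(w, x) ∈ Q.edges := by
    simp only [edges_cons, List.mem_cons, Sym2.eq_iff] at hwx
    grind [hxy.ne]
  obtain ⟨R, hwx', rfl⟩ := ((cons_isPath_iff _ _).mp hP).1.exists_eq_concat_of_mem_edges hwxQ
  exact ⟨hyz', R, hwx', rfl⟩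

-- `x → y → z ⇝ w → x` becomes `w → c → y → x → z ⇝ w`.
lemma IsCycle.exists_cycle_insert_swap {w x y z c : V} {hxy : G.Adj x y} {hyz : G.Adj y z}
    {hwx : G.Adj w x} {R : G.Walk z w} (hC : (cons hxy (cons hyz (R.concat hwx))).IsCycle)
    (hc : c ∉ (cons hxy (cons hyz (R.concat hwx))).support) (hcw : G.Adj c w) (hcy : G.Adj c y)
    (hxz : G.Adj x z) :
    ∃ C' : G.Walk w w, C'.IsCycle ∧
      C'.length = (cons hxy (cons hyz (R.concat hwx))).length + 1 ∧
      (∀ t, t ∈ C'.support ↔ t ∈ (cons hxy (cons hyz (R.concat hwx))).support ∨ t = c) ∧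
      {e | e ∈ C'.edges} =
        ({e | e ∈ (cons hxy (cons hyz (R.concat hwx))).edges} \ {s(w, x), s(x, y), s(y, z)}) ∪
          {s(w, c), s(c, y), s(y, x), s(x, z)} := by
  simp only [cons_isCycle_iff, cons_isPath_iff, concat_isPath_iff, support_concat,
    List.mem_append, List.mem_singleton, not_or] at hC
  obtain ⟨⟨⟨hR, hxR⟩, hyR, hyx⟩, -⟩ := hC
  simp only [support_cons, support_concat, List.mem_cons, List.mem_append, not_or] at hc
  obtain ⟨hcx, hcy', hcR, -⟩ := hc
  have hwR := R.end_mem_support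
  have hzR := R.start_mem_support
  refine ⟨cons hcw.symm (cons hcy (cons hxy.symm (cons hxz R))), ?_, by simp, ?_, ?_⟩
  · have hwy : w ≠ y := fun h ↦ hyR (h ▸ hwR)
    have hcwR : s(w, c) ∉ R.edges := fun h ↦ hcR (R.snd_mem_support_of_mem_edges h)
    have hcz : c ≠ z := fun h ↦ hcR (h ▸ hzR)
    simp [cons_isCycle_iff, cons_isPath_iff, hR, hcR, hxR, hyR, hcx, hcy', hyx, hwy, hcwR, hcz]
  · intro t
    simp only [support_cons, support_concat, List.mem_cons, List.mem_append]
    grind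
  · have hRe : ∀ e ∈ R.edges, e ≠ s(w, x) ∧ e ≠ s(x, y) ∧ e ≠ s(y, z) := by
      refine fun e he ↦ ⟨?_, ?_, ?_⟩ <;> rintro rfl
      · exact hxR (R.snd_mem_support_of_mem_edges he)
      · exact hxR (R.fst_mem_support_of_mem_edges he)
      · exact hyR (R.fst_mem_support_of_mem_edges he)
    ext e
    simp only [Set.mem_ofPred_eq, edges_cons, edges_concat, List.mem_cons, List.concat_eq_append,
      List.mem_append, Set.mem_union, Set.mem_sdiff, Set.mem_insert_iff, Set.mem_singleton_iff]
    grind [Sym2.eq_swap]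

end SimpleGraph.Walk

open SimpleGraph Walk

/-- Replacement used in Cases 4a and 5: if `w, x, y, z` are consecutive vertices of a
cycle `C`, `c` is a vertex off `C` adjacent to `w` and `y`, and `x` is adjacent to `z`
in `G`, then `G` has a cycle of length `|C| + 1` on vertex set `V(C) ∪ {c}`, obtained
from `C` by replacing the path `(w, x, y, z)` with the path `(w, c, y, x, z)`. -/
theorem case4a5_replacement {V : Type*} (G : SimpleGraph V) {v0 : V}
    (C : G.Walk v0 v0) (hC : C.IsCycle) (w x y z c : V)
    (hdist : [w, x, y, z].Pairwise (· ≠ ·))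
    (hwx : s(w, x) ∈ C.edges) (hxy : s(x, y) ∈ C.edges) (hyz : s(y, z) ∈ C.edges)
    (hc : c ∉ C.support) (hcw : G.Adj c w) (hcy : G.Adj c y) (hxz : G.Adj x z) :
    ∃ (w0 : V) (C' : G.Walk w0 w0), C'.IsCycle ∧ C'.length = C.length + 1 ∧
      (∀ t, t ∈ C'.support ↔ t ∈ C.support ∨ t = c) ∧
      {e | e ∈ C'.edges} =
        ({e | e ∈ C.edges} \ {s(w, x), s(x, y), s(y, z)}) ∪
          {s(w, c), s(c, y), s(y, x), s(x, z)} := by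
  have hwy : w ≠ y := List.rel_of_pairwise_cons hdist (by simp)
  obtain ⟨hxy', P, hP, hlen, hsupp, hedges⟩ := hC.exists_cons_of_mem_edges hxy
  obtain ⟨hyz', R, hwx', rfl⟩ :=
    hP.exists_eq_cons_cons_concat ((hedges _).mpr hyz) ((hedges _).mpr hwx) hwy hxz.ne
  obtain ⟨C', hC', hlen', hsupp', hedges'⟩ :=
    hP.exists_cycle_insert_swap (mt (hsupp c).mp hc) hcw hcy hxz
  exact ⟨w, C', hC', hlen ▸ hlen', fun t ↦ by rw [hsupp', hsupp], by simp only [hedges', hedges]⟩
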